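/- Approximate-backup error recursion: Let π be a policy of a finite discounted MDP, let ε_be ∈ [0, 2/(1−γ)], and let f', g : S×A → [0, 1/(1−γ)] satisfy |g(s,a) − (T^π f')(s,a)| ≤ ε_be for all (s,a). Then E_{(s,a)∼d^π}[(g(s,a) − Q^π(s,a))²] ≤ 4·ε_be/(1−γ) + γ · E_{(s,a)∼d^π}[(f'(s,a) − Q^π(s,a))²]. -/

import Mathlib

open Finset

structure FinMDP (S A : Type*) [Fintype S] [Fintype A] where
  P : S → A → S → ℝ
  P_nonneg : ∀ s a s', 0 ≤ P s a s'
  P_sum : ∀ s a, ∑ s', P s a s' = 1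
  r : S → A → ℝ
  r_nonneg : ∀ s a, 0 ≤ r s a
  r_le_one : ∀ s a, r s a ≤ 1
  disc : ℝ
  disc_pos : 0 < disc
  disc_lt_one : disc < 1
  init : S → ℝ
  init_nonneg : ∀ s, 0 ≤ init s
  init_sum : ∑ s, init s = 1

variable {S A : Type*} [Fintype S] [Fintype A] [Nonempty S] [Nonempty A]

/-- A policy assigns to each state a probability mass function over actions. -/
def IsPolicy (π : S → A → ℝ) : Prop :=
  (∀ s a, 0 ≤ π s a) ∧ ∀ s, ∑ a, π s a = 1

/-- The Bellman operator `T^π`. -/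
noncomputable def FinMDP.bellman (M : FinMDP S A) (π f : S → A → ℝ) (s : S) (a : A) : ℝ :=
  M.r s a + M.disc * ∑ s', M.P s a s' * ∑ a', π s' a' * f s' a'

/-- `Q` is the action-value function of `π`, i.e. satisfies the Bellman equation. -/
def FinMDP.IsQ (M : FinMDP S A) (π Q : S → A → ℝ) : Prop :=
  ∀ s a, Q s a = M.bellman π Q s a

/-- The state value `V^π(s)` induced by a `Q`-function. -/
noncomputable def vOf (π Q : S → A → ℝ) (s : S) : ℝ := ∑ a, π s a * Q s a

/-- The scalar value `V^π = E_{s ∼ μ₀}[V^π(s)]`. -/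
noncomputable def FinMDP.scalarV (M : FinMDP S A) (π Q : S → A → ℝ) : ℝ :=
  ∑ s, M.init s * vOf π Q s

/-- Distribution of the state at time `t` under policy `π`. -/
noncomputable def FinMDP.stateDist (M : FinMDP S A) (π : S → A → ℝ) : ℕ → S → ℝ
  | 0 => M.init
  | (t + 1) => fun s' => ∑ s, ∑ a, FinMDP.stateDist M π t s * π s a * M.P s a s'

/-- The discounted occupancy measure `d^π(s,a) = (1-γ) ∑_t γ^t Pr^π(s_t = s, a_t = a)`. -/
noncomputable def FinMDP.occ (M : FinMDP S A) (π : S → A → ℝ) (s : S) (a : A) : ℝ :=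
  (1 - M.disc) * ∑' t : ℕ, M.disc ^ t * M.stateDist π t s * π s a

/-!
Split `g - Q = (g - T^π f') + (T^π f' - Q)`. The first term is at most `ε_be`; the second equals
`γ P^π (f' - Q)` and is at most `1/(1-γ)` in absolute value because `f'` and `Q` both take values
in `[0, 1/(1-γ)]`. Expanding the square and applying Jensen's inequality to `P^π` give
`(g - Q)² ≤ 4 ε_be/(1-γ) + γ² P^π (f' - Q)²` pointwise. Finally, the flow equation
`d^π = (1-γ) μ₀π + γ d^π P^π` gives `γ E_{d^π}[P^π h] ≤ E_{d^π}[h]` for `h ≥ 0`.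
-/

section

omit [Nonempty S] [Nonempty A]

open Set

variable {π : S → A → ℝ}

omit [Fintype S] in
theorem IsPolicy.vOf_mem_Icc (hπ : IsPolicy π) {h : S → A → ℝ} {lo hi : ℝ} (s : S)
    (hh : ∀ a, h s a ∈ Icc lo hi) : vOf π h s ∈ Icc lo hi := by
  simpa only [vOf, smul_eq_mul] using
    (convex_Icc lo hi).sum_mem (fun a _ => hπ.1 s a) (hπ.2 s) fun a _ => hh a

omit [Fintype S] in
theorem IsPolicy.sq_vOf_le (hπ : IsPolicy π) (h : S → A → ℝ) (s : S) :
    vOf π h s ^ 2 ≤ vOf π (fun s a => h s a ^ 2) s := by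
  simpa only [vOf, smul_eq_mul] using
    even_two.convexOn_pow.map_sum_le (fun a _ => hπ.1 s a) (hπ.2 s) fun a _ => mem_univ (h s a)

theorem sq_add_le_of_abs_le {d e ε B : ℝ} (hd : |d| ≤ ε) (hε : ε ≤ 2 * B) (he : |e| ≤ B) :
    (d + e) ^ 2 ≤ 4 * ε * B + e ^ 2 := by
  have hε0 : 0 ≤ ε := (abs_nonneg d).trans hd
  have hsq : d ^ 2 ≤ 2 * ε * B := by
    calc d ^ 2 = |d| ^ 2 := (sq_abs d).symm
      _ ≤ ε ^ 2 := pow_le_pow_left₀ (abs_nonneg d) hd 2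
      _ ≤ 2 * ε * B := by nlinarith
  have hcross : d * e ≤ ε * B :=
    (le_abs_self _).trans (abs_mul d e ▸ mul_le_mul hd he (abs_nonneg e) hε0)
  linarith [add_sq d e]

namespace FinMDP

variable (M : FinMDP S A)

noncomputable def nextValue (π h : S → A → ℝ) (s : S) (a : A) : ℝ :=
  ∑ s', M.P s a s' * vOf π h s'

theorem bellman_eq_nextValue (π f : S → A → ℝ) (s : S) (a : A) :
    M.bellman π f s a = M.r s a + M.disc * M.nextValue π f s a :=
  rfl

theorem nextValue_sub (π f g : S → A → ℝ) (s : S) (a : A) :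
    M.nextValue π (fun s a => f s a - g s a) s a = M.nextValue π f s a - M.nextValue π g s a := by
  simp only [nextValue, vOf, mul_sub, sum_sub_distrib]

theorem nextValue_mem_Icc (hπ : IsPolicy π) {h : S → A → ℝ} {lo hi : ℝ}
    (hh : ∀ s a, h s a ∈ Icc lo hi) (s : S) (a : A) : M.nextValue π h s a ∈ Icc lo hi := by
  simpa only [nextValue, smul_eq_mul] using
    (convex_Icc lo hi).sum_mem (fun s' _ => M.P_nonneg s a s') (M.P_sum s a)
      fun s' _ => hπ.vOf_mem_Icc s' (hh s')

theorem sq_nextValue_le (hπ : IsPolicy π) (h : S → A → ℝ) (s : S) (a : A) :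
    M.nextValue π h s a ^ 2 ≤ M.nextValue π (fun s a => h s a ^ 2) s a := by
  have jensen := even_two.convexOn_pow.map_sum_le (fun s' _ => M.P_nonneg s a s') (M.P_sum s a)
    fun s' _ => mem_univ (vOf π h s')
  simp only [smul_eq_mul] at jensen
  exact jensen.trans <| sum_le_sum fun s' _ =>
    mul_le_mul_of_nonneg_left (hπ.sq_vOf_le h s') (M.P_nonneg s a s')

variable {M} in
theorem IsQ.bellman_sub {Q : S → A → ℝ} (hQ : M.IsQ π Q) (f : S → A → ℝ) (s : S) (a : A) :
    M.bellman π f s a - Q s a = M.disc * M.nextValue π (fun s a => f s a - Q s a) s a := by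
  rw [hQ s a, bellman_eq_nextValue, bellman_eq_nextValue, nextValue_sub]
  ring

variable {M} in
/-- Comparing `Q` with its own Bellman backup at a minimiser and at a maximiser. -/
theorem IsQ.mem_Icc (hπ : IsPolicy π) {Q : S → A → ℝ} (hQ : M.IsQ π Q) (s : S) (a : A) :
    Q s a ∈ Icc 0 (1 / (1 - M.disc)) := by
  have hγ := M.disc_pos
  have hγ1 : 0 < 1 - M.disc := sub_pos.mpr M.disc_lt_one
  have hne : (univ : Finset (S × A)).Nonempty := ⟨(s, a), mem_univ _⟩
  obtain ⟨pmin, -, hmin⟩ := exists_min_image univ (fun p : S × A => Q p.1 p.2) hne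
  obtain ⟨pmax, -, hmax⟩ := exists_max_image univ (fun p : S × A => Q p.1 p.2) hne
  have hQ_mem : ∀ s a, Q s a ∈ Icc (Q pmin.1 pmin.2) (Q pmax.1 pmax.2) := fun s a =>
    ⟨hmin (s, a) (mem_univ _), hmax (s, a) (mem_univ _)⟩
  have hlo : M.disc * Q pmin.1 pmin.2 ≤ Q pmin.1 pmin.2 := by
    have hback := hQ pmin.1 pmin.2
    rw [bellman_eq_nextValue] at hback
    have := mul_le_mul_of_nonneg_left (M.nextValue_mem_Icc hπ hQ_mem pmin.1 pmin.2).1 hγ.le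
    linarith [M.r_nonneg pmin.1 pmin.2]
  have hhi : Q pmax.1 pmax.2 ≤ 1 + M.disc * Q pmax.1 pmax.2 := by
    have hback := hQ pmax.1 pmax.2
    rw [bellman_eq_nextValue] at hback
    have := mul_le_mul_of_nonneg_left (M.nextValue_mem_Icc hπ hQ_mem pmax.1 pmax.2).2 hγ.le
    linarith [M.r_le_one pmax.1 pmax.2]
  refine ⟨?_, ?_⟩
  · nlinarith [(hQ_mem s a).1]
  · rw [le_div_iff₀ hγ1]
    nlinarith [(hQ_mem s a).2]

theorem stateDist_nonneg (hπ : IsPolicy π) (t : ℕ) (s : S) : 0 ≤ M.stateDist π t s := by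
  induction t generalizing s with
  | zero => exact M.init_nonneg s
  | succ t ih =>
    exact sum_nonneg fun s' _ => sum_nonneg fun a _ =>
      mul_nonneg (mul_nonneg (ih s') (hπ.1 s' a)) (M.P_nonneg s' a s)

theorem sum_stateDist (hπ : IsPolicy π) (t : ℕ) : ∑ s, M.stateDist π t s = 1 := by
  induction t with
  | zero => exact M.init_sum
  | succ t ih =>
    simp only [stateDist]
    rw [sum_comm]
    simp only [sum_comm (γ := S), mul_assoc, ← mul_sum, M.P_sum, mul_one, hπ.2, ih]

theorem stateDist_le_one (hπ : IsPolicy π) (t : ℕ) (s : S) : M.stateDist π t s ≤ 1 :=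
  M.sum_stateDist hπ t ▸
    single_le_sum (fun s' _ => M.stateDist_nonneg hπ t s') (mem_univ s)

noncomputable def discountedVisits (π : S → A → ℝ) (s : S) : ℝ :=
  ∑' t : ℕ, M.disc ^ t * M.stateDist π t s

theorem hasSum_discountedVisits (hπ : IsPolicy π) (s : S) :
    HasSum (fun t : ℕ => M.disc ^ t * M.stateDist π t s) (M.discountedVisits π s) := by
  refine (Summable.of_nonneg_of_le (fun t => ?_) (fun t => ?_)
    (summable_geometric_of_lt_one M.disc_pos.le M.disc_lt_one)).hasSum
  · exact mul_nonneg (pow_nonneg M.disc_pos.le t) (M.stateDist_nonneg hπ t s)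
  · exact mul_le_of_le_one_right (pow_nonneg M.disc_pos.le t) (M.stateDist_le_one hπ t s)

/-- The Bellman flow equation. -/
theorem discountedVisits_eq (hπ : IsPolicy π) (s' : S) :
    M.discountedVisits π s' =
      M.init s' + M.disc * ∑ s, ∑ a, M.discountedVisits π s * π s a * M.P s a s' := by
  have hshift : HasSum (fun t : ℕ => M.disc ^ (t + 1) * M.stateDist π (t + 1) s')
      (M.disc * ∑ s, ∑ a, M.discountedVisits π s * (π s a * M.P s a s')) := by
    refine ((hasSum_sum fun s _ => hasSum_sum fun a _ =>
      (M.hasSum_discountedVisits hπ s).mul_right (π s a * M.P s a s')).mul_left M.disc).congr_fun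
      fun t => ?_
    simp only [stateDist, pow_succ, mul_sum]
    exact sum_congr rfl fun s _ => sum_congr rfl fun a _ => by ring
  rw [discountedVisits, (M.hasSum_discountedVisits hπ s').summable.tsum_eq_zero_add,
    hshift.tsum_eq]
  simp only [pow_zero, one_mul, stateDist, mul_assoc]

theorem occ_eq (π : S → A → ℝ) (s : S) (a : A) :
    M.occ π s a = (1 - M.disc) * M.discountedVisits π s * π s a := by
  rw [occ, discountedVisits, mul_assoc, ← tsum_mul_right]

theorem occ_nonneg (hπ : IsPolicy π) (s : S) (a : A) : 0 ≤ M.occ π s a := by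
  rw [occ_eq]
  exact mul_nonneg (mul_nonneg (sub_pos.mpr M.disc_lt_one).le
    ((M.hasSum_discountedVisits hπ s).nonneg fun t =>
      mul_nonneg (pow_nonneg M.disc_pos.le t) (M.stateDist_nonneg hπ t s))) (hπ.1 s a)

theorem sum_occ_mul_eq (hπ : IsPolicy π) (h : S → A → ℝ) :
    ∑ s, ∑ a, M.occ π s a * h s a =
      (1 - M.disc) * M.scalarV π h + M.disc * ∑ s, ∑ a, M.occ π s a * M.nextValue π h s a := by
  calc ∑ s, ∑ a, M.occ π s a * h s a
      = (1 - M.disc) * ∑ s, M.discountedVisits π s * vOf π h s := by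
        simp only [occ_eq, vOf, mul_sum]
        exact sum_congr rfl fun s _ => sum_congr rfl fun a _ => by ring
    _ = (1 - M.disc) * ∑ s, (M.init s +
          M.disc * ∑ s₀, ∑ a₀, M.discountedVisits π s₀ * π s₀ a₀ * M.P s₀ a₀ s) * vOf π h s := by
        simp only [← M.discountedVisits_eq hπ]
    _ = _ := by
        simp only [scalarV, nextValue, occ_eq, add_mul, sum_add_distrib, mul_add, mul_sum, sum_mul]
        congr 1
        rw [sum_comm]
        refine sum_congr rfl fun s₀ _ => ?_
        rw [sum_comm]
        exact sum_congr rfl fun a₀ _ => sum_congr rfl fun s _ => by ring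

theorem sum_occ_eq_one (hπ : IsPolicy π) : ∑ s, ∑ a, M.occ π s a = 1 := by
  have hflow := M.sum_occ_mul_eq hπ fun _ _ => 1
  have hV : ∀ s, vOf π (fun _ _ => (1 : ℝ)) s = 1 := fun s => by simp [vOf, hπ.2 s]
  simp only [scalarV, nextValue, hV, mul_one, M.init_sum, M.P_sum] at hflow
  nlinarith [M.disc_lt_one]

theorem disc_mul_sum_occ_mul_nextValue_le (hπ : IsPolicy π) {h : S → A → ℝ}
    (hh : ∀ s a, 0 ≤ h s a) :
    M.disc * ∑ s, ∑ a, M.occ π s a * M.nextValue π h s a ≤ ∑ s, ∑ a, M.occ π s a * h s a := by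
  have hstart : 0 ≤ M.scalarV π h := sum_nonneg fun s _ =>
    mul_nonneg (M.init_nonneg s) (sum_nonneg fun a _ => mul_nonneg (hπ.1 s a) (hh s a))
  have hγ1 : 0 ≤ 1 - M.disc := (sub_pos.mpr M.disc_lt_one).le
  linarith [M.sum_occ_mul_eq hπ h, mul_nonneg hγ1 hstart]

theorem sq_sub_le_of_abs_sub_bellman_le (hπ : IsPolicy π) {Q f g : S → A → ℝ} (hQ : M.IsQ π Q)
    {ε : ℝ} (hε : ε ≤ 2 / (1 - M.disc)) (hf : ∀ s a, f s a ∈ Icc 0 (1 / (1 - M.disc)))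
    (s : S) (a : A) (hg : |g s a - M.bellman π f s a| ≤ ε) :
    (g s a - Q s a) ^ 2 ≤
      4 * ε / (1 - M.disc) + M.disc ^ 2 * M.nextValue π (fun s a => (f s a - Q s a) ^ 2) s a := by
  set B := 1 / (1 - M.disc)
  have hdiff : ∀ s a, f s a - Q s a ∈ Icc (-B) B := fun s a => by
    obtain ⟨hf0, hfB⟩ := hf s a
    obtain ⟨hQ0, hQB⟩ := hQ.mem_Icc hπ s a
    constructor <;> linarith
  have hbackup_err : |M.bellman π f s a - Q s a| ≤ B := by
    rw [hQ.bellman_sub, abs_mul, abs_of_pos M.disc_pos]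
    calc M.disc * |M.nextValue π (fun s a => f s a - Q s a) s a|
        ≤ 1 * B := mul_le_mul M.disc_lt_one.le (abs_le.mpr (M.nextValue_mem_Icc hπ hdiff s a))
          (abs_nonneg _) zero_le_one
      _ = B := one_mul B
  have hε' : ε ≤ 2 * B := by rwa [mul_one_div]
  calc (g s a - Q s a) ^ 2
      = ((g s a - M.bellman π f s a) + (M.bellman π f s a - Q s a)) ^ 2 := by ring
    _ ≤ 4 * ε * B + (M.bellman π f s a - Q s a) ^ 2 := sq_add_le_of_abs_le hg hε' hbackup_err
    _ ≤ 4 * ε / (1 - M.disc) +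
          M.disc ^ 2 * M.nextValue π (fun s a => (f s a - Q s a) ^ 2) s a := by
      rw [hQ.bellman_sub, mul_pow, mul_one_div]
      gcongr
      exact M.sq_nextValue_le hπ _ s a

end FinMDP

end

theorem stmt8_general (M : FinMDP S A) (π Q : S → A → ℝ) (hπ : IsPolicy π) (hQ : M.IsQ π Q)
    (εbe : ℝ) (hεbe1 : εbe ≤ 2 / (1 - M.disc))
    (f' g : S → A → ℝ)
    (hf'mem : ∀ s a, f' s a ∈ Set.Icc 0 (1 / (1 - M.disc)))
    (hg : ∀ s a, |g s a - M.bellman π f' s a| ≤ εbe) :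
    ∑ s, ∑ a, M.occ π s a * (g s a - Q s a) ^ 2
      ≤ 4 * εbe / (1 - M.disc) + M.disc * ∑ s, ∑ a, M.occ π s a * (f' s a - Q s a) ^ 2 := by
  set h := fun s a => (f' s a - Q s a) ^ 2
  calc ∑ s, ∑ a, M.occ π s a * (g s a - Q s a) ^ 2
      ≤ ∑ s, ∑ a, M.occ π s a *
          (4 * εbe / (1 - M.disc) + M.disc ^ 2 * M.nextValue π h s a) :=
        sum_le_sum fun s _ => sum_le_sum fun a _ => mul_le_mul_of_nonneg_left
          (M.sq_sub_le_of_abs_sub_bellman_le hπ hQ hεbe1 hf'mem s a (hg s a)) (M.occ_nonneg hπ s a)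
    _ = 4 * εbe / (1 - M.disc) +
          M.disc * (M.disc * ∑ s, ∑ a, M.occ π s a * M.nextValue π h s a) := by
        simp only [mul_add, sum_add_distrib, ← sum_mul, M.sum_occ_eq_one hπ, one_mul,
          mul_left_comm (M.occ π _ _), ← mul_sum]
        ring
    _ ≤ 4 * εbe / (1 - M.disc) + M.disc * ∑ s, ∑ a, M.occ π s a * h s a :=
        (add_le_add_iff_left _).mpr <| mul_le_mul_of_nonneg_left
          (M.disc_mul_sum_occ_mul_nextValue_le hπ fun s a => sq_nonneg _) M.disc_pos.le

/-- Approximate-backup error recursion. -/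
theorem stmt8 (M : FinMDP S A) (π Q : S → A → ℝ) (hπ : IsPolicy π) (hQ : M.IsQ π Q)
    (εbe : ℝ) (hεbe0 : 0 ≤ εbe) (hεbe1 : εbe ≤ 2 / (1 - M.disc))
    (f' g : S → A → ℝ)
    (hf'mem : ∀ s a, f' s a ∈ Set.Icc 0 (1 / (1 - M.disc)))
    (hgmem : ∀ s a, g s a ∈ Set.Icc 0 (1 / (1 - M.disc)))
    (hg : ∀ s a, |g s a - M.bellman π f' s a| ≤ εbe) :
    ∑ s, ∑ a, M.occ π s a * (g s a - Q s a) ^ 2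
      ≤ 4 * εbe / (1 - M.disc) + M.disc * ∑ s, ∑ a, M.occ π s a * (f' s a - Q s a) ^ 2 :=
  stmt8_general M π Q hπ hQ εbe hεbe1 f' g hf'mem hg
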